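/- With the choice (X⊥ᵀX⊥)⁻¹ = Γ₃, one has X⊥(X⊥ᵀA⁻¹X⊥)⁻¹(X⊥ᵀX⊥)(X⊥ᵀA⁻¹X⊥)⁻¹X⊥ᵀ = (A(I_n − XJXᵀA))ᵀ(A(I_n − XJXᵀA)) = (A(I_n − XJXᵀA))², so that M_X = (1/ρ)AXXᵀA + (A(I_n − XJXᵀA))². -/

import Mathlib

open Matrix

/-!
The columns of `X` and of `A⁻¹X⊥` are biorthogonal to the rows of `JXᵀA` and of
`(X⊥ᵀA⁻¹X⊥)⁻¹X⊥ᵀ`; since there are `k + (n - k) = n` of them, the resulting one-sided inverse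
of square block matrices is two-sided, which is the resolution of the identity
`I = XJXᵀA + A⁻¹X⊥(X⊥ᵀA⁻¹X⊥)⁻¹X⊥ᵀ`. Hence `A(I - XJXᵀA) = P := X⊥(X⊥ᵀA⁻¹X⊥)⁻¹X⊥ᵀ`, which is
symmetric because `A` is, and the left-hand side of the theorem is `P²`.
-/

namespace Matrix

variable {m n k l R : Type*} [Fintype m] [Fintype n] [Fintype k] [Fintype l] [CommRing R]

theorem IsSymm.mul_inv_mul_transpose [DecidableEq n] [DecidableEq l] {A : Matrix n n R}
    (hA : A.IsSymm) (B : Matrix n l R) : (B * (Bᵀ * A⁻¹ * B)⁻¹ * Bᵀ).IsSymm := by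
  have hG : (Bᵀ * A⁻¹ * B).IsSymm := by
    rw [IsSymm, transpose_mul, transpose_mul, transpose_transpose, hA.inv.eq, Matrix.mul_assoc]
  rw [IsSymm, transpose_mul, transpose_mul, transpose_transpose, hG.inv.eq]
  simp only [Matrix.mul_assoc]

variable [Nontrivial R]

theorem card_le_card_of_mul_eq_one [DecidableEq m] {E : Matrix m n R} {C : Matrix n m R}
    (h : E * C = 1) : Fintype.card m ≤ Fintype.card n :=
  calc Fintype.card m = (E * C).rank := by rw [h, rank_one]
    _ ≤ E.rank := rank_mul_le_left E C
    _ ≤ Fintype.card n := rank_le_card_width E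

theorem mul_eq_one_comm_of_card_le [DecidableEq m] [DecidableEq n] {E : Matrix m n R}
    {C : Matrix n m R} (h : E * C = 1) (hcard : Fintype.card n ≤ Fintype.card m) : C * E = 1 :=
  (mul_eq_one_comm_of_card_eq m n R (le_antisymm (card_le_card_of_mul_eq_one h) hcard)).mp h

theorem mul_add_mul_eq_one_of_biorthogonal [DecidableEq n] [DecidableEq k] [DecidableEq l]
    {C₁ : Matrix n k R} {C₂ : Matrix n l R} {E₁ : Matrix k n R} {E₂ : Matrix l n R}
    (h₁₁ : E₁ * C₁ = 1) (h₁₂ : E₁ * C₂ = 0) (h₂₁ : E₂ * C₁ = 0) (h₂₂ : E₂ * C₂ = 1)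
    (hcard : Fintype.card n ≤ Fintype.card k + Fintype.card l) :
    C₁ * E₁ + C₂ * E₂ = 1 := by
  rw [← fromCols_mul_fromRows]
  refine mul_eq_one_comm_of_card_le ?_ (by rwa [Fintype.card_sum])
  rw [fromRows_mul_fromCols, h₁₁, h₁₂, h₂₁, h₂₂, fromBlocks_one]

variable [DecidableEq n] [DecidableEq k] [DecidableEq l]

theorem mul_mul_transpose_mul_add_inv_mul_eq_one {A : Matrix n n R} {J : Matrix k k R}
    {X : Matrix n k R} {Y : Matrix n l R} (hA : IsUnit A.det) (hJ2 : J * J = 1)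
    (hX : Xᵀ * A * X = J) (hXY : Xᵀ * Y = 0) (hY : IsUnit (Yᵀ * A⁻¹ * Y).det)
    (hcard : Fintype.card n ≤ Fintype.card k + Fintype.card l) :
    X * J * Xᵀ * A + A⁻¹ * (Y * (Yᵀ * A⁻¹ * Y)⁻¹ * Yᵀ) = 1 := by
  have hYX : Yᵀ * X = 0 := by rw [← transpose_transpose X, ← transpose_mul, hXY, transpose_zero]
  have h := mul_add_mul_eq_one_of_biorthogonal (C₁ := X) (C₂ := A⁻¹ * Y)
    (E₁ := J * Xᵀ * A) (E₂ := (Yᵀ * A⁻¹ * Y)⁻¹ * Yᵀ)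
    (by rw [Matrix.mul_assoc, Matrix.mul_assoc, ← Matrix.mul_assoc Xᵀ, hX, hJ2])
    (by rw [Matrix.mul_assoc, ← Matrix.mul_assoc A, mul_nonsing_inv A hA, Matrix.one_mul,
      Matrix.mul_assoc, hXY, Matrix.mul_zero])
    (by rw [Matrix.mul_assoc, hYX, Matrix.mul_zero])
    (by rw [Matrix.mul_assoc, ← Matrix.mul_assoc Yᵀ, nonsing_inv_mul _ hY]) hcard
  simpa only [Matrix.mul_assoc] using h

end Matrix

theorem stmt_7_general {n k : ℕ} (A : Matrix (Fin n) (Fin n) ℝ) (J : Matrix (Fin k) (Fin k) ℝ)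
    (hA : Aᵀ = A) (hAinv : IsUnit A.det) (hJ2 : J * J = 1)
    (X : Matrix (Fin n) (Fin k) ℝ) (hX : Xᵀ * A * X = J)
    (Xp : Matrix (Fin n) (Fin (n - k)) ℝ)
    (hperp : Xᵀ * Xp = 0) (hXpinv : IsUnit (Xpᵀ * A⁻¹ * Xp).det) (ρ : ℝ) :
    Xp * (Xpᵀ * A⁻¹ * Xp)⁻¹ * (Xpᵀ * Xp) * (Xpᵀ * A⁻¹ * Xp)⁻¹ * Xpᵀ =
        (A * (1 - X * J * Xᵀ * A))ᵀ * (A * (1 - X * J * Xᵀ * A)) ∧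
    Xp * (Xpᵀ * A⁻¹ * Xp)⁻¹ * (Xpᵀ * Xp) * (Xpᵀ * A⁻¹ * Xp)⁻¹ * Xpᵀ =
        (A * (1 - X * J * Xᵀ * A)) ^ 2 ∧
    ρ⁻¹ • (A * X * Xᵀ * A) +
        Xp * (Xpᵀ * A⁻¹ * Xp)⁻¹ * (Xpᵀ * Xp) * (Xpᵀ * A⁻¹ * Xp)⁻¹ * Xpᵀ =
      ρ⁻¹ • (A * X * Xᵀ * A) + (A * (1 - X * J * Xᵀ * A)) ^ 2 := by
  set P := Xp * (Xpᵀ * A⁻¹ * Xp)⁻¹ * Xpᵀ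
  have hdecomp : X * J * Xᵀ * A + A⁻¹ * P = 1 :=
    mul_mul_transpose_mul_add_inv_mul_eq_one hAinv hJ2 hX hperp hXpinv (by simp only [Fintype.card_fin]; omega)
  have hproj : A * (1 - X * J * Xᵀ * A) = P := by
    rw [← hdecomp, add_sub_cancel_left, ← Matrix.mul_assoc, mul_nonsing_inv A hAinv,
      Matrix.one_mul]
  have hsq : Xp * (Xpᵀ * A⁻¹ * Xp)⁻¹ * (Xpᵀ * Xp) * (Xpᵀ * A⁻¹ * Xp)⁻¹ * Xpᵀ = P * P := by
    simp only [P, Matrix.mul_assoc]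
  have hsymm : Pᵀ = P := (IsSymm.mul_inv_mul_transpose hA Xp).eq
  exact ⟨by rw [hsq, hproj, hsymm], by rw [hsq, hproj, sq], by rw [hsq, hproj, sq]⟩

/-- With the choice `Γ₃ = (X⊥ᵀX⊥)⁻¹`, one has
`X⊥ (X⊥ᵀA⁻¹X⊥)⁻¹ (X⊥ᵀX⊥) (X⊥ᵀA⁻¹X⊥)⁻¹ X⊥ᵀ = (A(I − XJXᵀA))ᵀ (A(I − XJXᵀA))
 = (A(I − XJXᵀA))²`,
so that `M_X = (1/ρ) A X Xᵀ A + (A(I − XJXᵀA))²`. -/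
theorem stmt_7 {n k : ℕ} (A : Matrix (Fin n) (Fin n) ℝ) (J : Matrix (Fin k) (Fin k) ℝ)
    (hA : Aᵀ = A) (hAinv : IsUnit A.det) (hJ : Jᵀ = J) (hJ2 : J * J = 1)
    (X : Matrix (Fin n) (Fin k) ℝ) (hX : Xᵀ * A * X = J)
    (Xp : Matrix (Fin n) (Fin (n - k)) ℝ) (hXp : Xp.rank = n - k)
    (hperp : Xᵀ * Xp = 0) (hXpinv : IsUnit (Xpᵀ * A⁻¹ * Xp).det) (ρ : ℝ) (hρ : 0 < ρ) :
    Xp * (Xpᵀ * A⁻¹ * Xp)⁻¹ * (Xpᵀ * Xp) * (Xpᵀ * A⁻¹ * Xp)⁻¹ * Xpᵀ =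
        (A * (1 - X * J * Xᵀ * A))ᵀ * (A * (1 - X * J * Xᵀ * A)) ∧
    Xp * (Xpᵀ * A⁻¹ * Xp)⁻¹ * (Xpᵀ * Xp) * (Xpᵀ * A⁻¹ * Xp)⁻¹ * Xpᵀ =
        (A * (1 - X * J * Xᵀ * A)) ^ 2 ∧
    ρ⁻¹ • (A * X * Xᵀ * A) +
        Xp * (Xpᵀ * A⁻¹ * Xp)⁻¹ * (Xpᵀ * Xp) * (Xpᵀ * A⁻¹ * Xp)⁻¹ * Xpᵀ =
      ρ⁻¹ • (A * X * Xᵀ * A) + (A * (1 - X * J * Xᵀ * A)) ^ 2 :=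
  stmt_7_general A J hA hAinv hJ2 X hX Xp hperp hXpinv ρ
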